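/- arXiv:math/0304314 — 2 statements merged into one kernel-verified Lean document; each statement's English description precedes it below -/
import Mathlib

section
/- Classification of odd Moore algebras (Theorem 3.1, concretized): Let R be a commutative ring in which 2 is invertible. Call two even power series u, u' ∈ R[[t]] with zero constant coefficient H-equivalent if u' = u∘F for some odd power series F ∈ R[[t]] whose coefficient of t is a unit. Then the assignment u ↦ (0,u) induces a bijection between the set of H-equivalence classes of even power series with zero constant coefficient and the set of ∼-equivalence classes of pairs (v,w) of even power series with zero constant coefficient. (This realizes the paper's Theorem: unital weak equivalence classes of odd Moore algebras of degree d over R are in one-to-one correspondence with orbits of the group H acting by substitution on power series of degree −2 with vanishing constant term.) -/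
open PowerSeries

variable {R : Type*} [CommRing R]

/-- Substitution of the power series `G` (with zero constant coefficient) into `F`. -/
noncomputable def PowerSeries.comp (F G : R⟦X⟧) : R⟦X⟧ :=
  PowerSeries.mk fun n => ∑ k ∈ Finset.range (n + 1), coeff k F * coeff n (G ^ k)

/-- A power series is even if all its odd-degree coefficients vanish. -/
def PowerSeries.IsEven (F : R⟦X⟧) : Prop := ∀ n : ℕ, Odd n → coeff n F = 0

/-- A power series is odd if all its even-degree coefficients vanish. -/
def PowerSeries.IsOdd (F : R⟦X⟧) : Prop := ∀ n : ℕ, Even n → coeff n F = 0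

/-- Membership in the group `H`: zero constant coefficient and unit coefficient of `t`. -/
def PowerSeries.InH (F : R⟦X⟧) : Prop :=
  constantCoeff F = 0 ∧ IsUnit (coeff 1 F)

/-- For `v = ∑_{i≥1} v_i t^{2i}`, this is `v⟨F⟩ := ∑_{i≥1} v_i F^{2i-1}`. -/
noncomputable def PowerSeries.substOddPow (v F : R⟦X⟧) : R⟦X⟧ :=
  PowerSeries.mk fun n =>
    ∑ i ∈ Finset.range (n + 1), coeff (2 * (i + 1)) v * coeff n (F ^ (2 * (i + 1) - 1))

/-- The action `T_{(G,F)}` of a unital `A_∞`-isomorphism on the pair `(v,w)` of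
characteristic power series of an odd Moore algebra. -/
noncomputable def MooreAct (G F : R⟦X⟧) (p : R⟦X⟧ × R⟦X⟧) : R⟦X⟧ × R⟦X⟧ :=
  (2 * PowerSeries.X * G + PowerSeries.X * PowerSeries.substOddPow p.1 F,
    -(G * PowerSeries.substOddPow p.1 F) + PowerSeries.comp p.2 F - G ^ 2)

/-! The series `w + (v/t)²/4` is an invariant of the pair `(v, w)`: completing the square in the
second component of `T_{(G,F)}` shows that `T_{(G,F)}` transports it to its composite with `F`.
Conversely `T_{(-v/(2t), t)}` kills the first component and sends `(v, w)` to
`(0, w + (v/t)²/4)`, while on pairs `(0, u)` the action `T_{(0,F)}` is just `u ↦ u∘F`. Hence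
`(v, w) ↦ w + (v/t)²/4` inverts `u ↦ (0, u)` on equivalence classes. -/

open Finset

namespace PowerSeries

lemma coeff_pow_eq_zero_of_lt {F : R⟦X⟧} (hF : constantCoeff F = 0) {n k : ℕ} (h : n < k) :
    coeff n (F ^ k) = 0 :=
  X_pow_dvd_iff.mp (pow_dvd_pow_of_dvd (X_dvd_iff.mpr hF) k) n h

lemma coeff_comp (F G : R⟦X⟧) (n : ℕ) :
    coeff n (F.comp G) = ∑ k ∈ range (n + 1), coeff k F * coeff n (G ^ k) :=
  coeff_mk _ _

lemma comp_eq_subst (F : R⟦X⟧) {G : R⟦X⟧} (hG : constantCoeff G = 0) :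
    F.comp G = F.subst G := by
  ext n
  rw [coeff_comp, coeff_subst' (HasSubst.of_constantCoeff_zero' hG),
    finsum_eq_sum_of_support_subset (s := range (n + 1)) _ fun k hk => ?_]
  · simp only [smul_eq_mul]
  · by_contra hkn
    simp only [coe_range, Set.mem_Iio, not_lt] at hkn
    exact hk (smul_eq_zero_of_right _ (coeff_pow_eq_zero_of_lt hG (by omega)))

lemma comp_X (F : R⟦X⟧) : F.comp X = F := by
  rw [comp_eq_subst F constantCoeff_X, X_subst]

lemma IsOdd.constantCoeff_eq_zero {F : R⟦X⟧} (hF : F.IsOdd) : constantCoeff F = 0 := by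
  simpa using hF 0 ⟨0, rfl⟩

lemma isOdd_X : (X : R⟦X⟧).IsOdd := fun n hn => by
  rw [coeff_X, if_neg (by rintro rfl; exact Nat.not_even_one hn)]

lemma isOdd_zero : (0 : R⟦X⟧).IsOdd := fun _ _ => map_zero _

lemma IsOdd.neg {a : R⟦X⟧} (ha : a.IsOdd) : (-a).IsOdd := fun n hn => by
  rw [map_neg, ha n hn, neg_zero]

lemma IsOdd.add {a b : R⟦X⟧} (ha : a.IsOdd) (hb : b.IsOdd) : (a + b).IsOdd := fun n hn => by
  rw [map_add, ha n hn, hb n hn, add_zero]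

lemma IsEven.add {a b : R⟦X⟧} (ha : a.IsEven) (hb : b.IsEven) : (a + b).IsEven := fun n hn => by
  rw [map_add, ha n hn, hb n hn, add_zero]

lemma IsOdd.C_mul {a : R⟦X⟧} (ha : a.IsOdd) (r : R) : (C r * a).IsOdd := fun n hn => by
  rw [coeff_C_mul, ha n hn, mul_zero]

lemma IsEven.C_mul {a : R⟦X⟧} (ha : a.IsEven) (r : R) : (C r * a).IsEven := fun n hn => by
  rw [coeff_C_mul, ha n hn, mul_zero]

lemma IsOdd.mul {a b : R⟦X⟧} (ha : a.IsOdd) (hb : b.IsOdd) : (a * b).IsEven := by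
  intro n hn
  rw [coeff_mul]
  refine sum_eq_zero fun ⟨i, j⟩ hij => ?_
  rw [HasAntidiagonal.mem_antidiagonal] at hij
  subst hij
  rcases Nat.even_or_odd i with hi | hi
  · rw [ha i hi, zero_mul]
  · rw [hb j (Nat.odd_add.mp hn |>.mp hi), mul_zero]

lemma IsEven.mul_isOdd {a b : R⟦X⟧} (ha : a.IsEven) (hb : b.IsOdd) : (a * b).IsOdd := by
  intro n hn
  rw [coeff_mul]
  refine sum_eq_zero fun ⟨i, j⟩ hij => ?_
  rw [HasAntidiagonal.mem_antidiagonal] at hij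
  subst hij
  rcases Nat.even_or_odd i with hi | hi
  · rw [hb j (Nat.even_add.mp hn |>.mp hi), mul_zero]
  · rw [ha i hi, zero_mul]

lemma IsOdd.pow_two_mul_add_one {F : R⟦X⟧} (hF : F.IsOdd) (i : ℕ) :
    (F ^ (2 * i + 1)).IsOdd := by
  induction i with
  | zero => simpa using hF
  | succ i ih =>
    rw [show 2 * (i + 1) + 1 = 2 * i + 1 + 1 + 1 by ring, pow_succ, pow_succ]
    exact (ih.mul hF).mul_isOdd hF

lemma IsOdd.substOddPow (v : R⟦X⟧) {F : R⟦X⟧} (hF : F.IsOdd) : (v.substOddPow F).IsOdd := by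
  intro n hn
  rw [PowerSeries.substOddPow, coeff_mk]
  refine sum_eq_zero fun i _ => ?_
  rw [show 2 * (i + 1) - 1 = 2 * i + 1 by omega, hF.pow_two_mul_add_one i n hn, mul_zero]

lemma coeff_substOddPow_X (v : R⟦X⟧) (k : ℕ) :
    coeff k (v.substOddPow X) = if Odd k then coeff (k + 1) v else 0 := by
  rw [substOddPow, coeff_mk]
  split_ifs with hk
  · obtain ⟨m, rfl⟩ := hk
    rw [sum_eq_single_of_mem m (mem_range.mpr (by omega)) fun i _ him => by
      rw [coeff_X_pow, if_neg (by omega), mul_zero]]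
    rw [coeff_X_pow, if_pos (by omega), mul_one, show 2 * (m + 1) = 2 * m + 1 + 1 by ring]
  · refine sum_eq_zero fun i _ => ?_
    rw [coeff_X_pow, if_neg (by rintro rfl; exact hk ⟨i, by omega⟩), mul_zero]

lemma substOddPow_X_eq_comp (v : R⟦X⟧) {F : R⟦X⟧} (hF : constantCoeff F = 0) :
    v.substOddPow F = (v.substOddPow X).comp F := by
  ext n
  set f : ℕ → R := fun k => coeff k (v.substOddPow X) * coeff n (F ^ k)
  have odd_index :
      ∑ k ∈ range (n + 1), f k = ∑ k ∈ (range (n + 1)).image (2 * · + 1), f k :=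
    calc ∑ k ∈ range (n + 1), f k = ∑ k ∈ range (2 * n + 2), f k :=
          sum_subset (range_subset_range.mpr (by omega)) fun k _ hk => by
            rw [mem_range] at hk
            simp only [f, coeff_pow_eq_zero_of_lt hF (by omega : n < k), mul_zero]
      _ = _ := by
        refine (sum_subset (fun k => by simp only [mem_image, mem_range]; omega)
          fun k hk hk' => ?_).symm
        dsimp only [f]
        rw [coeff_substOddPow_X, if_neg fun ⟨i, hi⟩ => hk' (mem_image.mpr
          ⟨i, mem_range.mpr (by rw [mem_range] at hk; omega), hi.symm⟩), zero_mul]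
  rw [coeff_comp, odd_index, sum_image fun i _ j _ h => by omega, substOddPow, coeff_mk]
  refine sum_congr rfl fun i _ => ?_
  dsimp only [f]
  rw [coeff_substOddPow_X, if_pos ⟨i, rfl⟩, show 2 * (i + 1) - 1 = 2 * i + 1 by omega,
    show 2 * (i + 1) = 2 * i + 1 + 1 by ring]

lemma substOddPow_X_X_mul {a : R⟦X⟧} (ha : a.IsOdd) : (X * a).substOddPow X = a := by
  ext k
  rw [coeff_substOddPow_X]
  split_ifs with hk
  · exact coeff_succ_X_mul k a
  · exact (ha k (Nat.not_odd_iff_even.mp hk)).symm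

lemma substOddPow_zero (F : R⟦X⟧) : (0 : R⟦X⟧).substOddPow F = 0 := by
  ext n
  simp [substOddPow]

end PowerSeries

open PowerSeries

/-- For `c = 1/2` and `v` even without constant term this is `w + (v/t)² / 4`. -/
noncomputable def mooreInvariant (c : R) (p : R⟦X⟧ × R⟦X⟧) : R⟦X⟧ :=
  p.2 + C (c ^ 2) * p.1.substOddPow X ^ 2

lemma mooreInvariant_mooreAct {c : R} (hc : 2 * c = 1) {G F : R⟦X⟧} (hG : G.IsOdd)
    (hF : F.IsOdd) (p : R⟦X⟧ × R⟦X⟧) :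
    mooreInvariant c (MooreAct G F p) = (mooreInvariant c p).comp F := by
  obtain ⟨v, w⟩ := p
  have hF0 := hF.constantCoeff_eq_zero
  have h2C : 2 * C c = 1 := by rw [← map_ofNat C 2, ← map_mul, hc, map_one]
  have h2G : (2 * G).IsOdd := by rw [← map_ofNat C 2]; exact hG.C_mul 2
  have fst : (MooreAct G F (v, w)).1.substOddPow X = 2 * G + v.substOddPow F := by
    rw [MooreAct, show 2 * X * G + X * v.substOddPow F = X * (2 * G + v.substOddPow F) by ring,
      substOddPow_X_X_mul (h2G.add (hF.substOddPow v))]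
  have hsubst := HasSubst.of_constantCoeff_zero' hF0
  rw [mooreInvariant, mooreInvariant, fst, comp_eq_subst _ hF0, subst_add hsubst,
    subst_mul hsubst, subst_pow hsubst, subst_C, ← comp_eq_subst _ hF0,
    show (MvPowerSeries.C (c ^ 2) : R⟦X⟧) = C (c ^ 2) from rfl,
    ← comp_eq_subst _ hF0, ← substOddPow_X_eq_comp v hF0]
  simp only [MooreAct, map_pow]
  linear_combination (G ^ 2 + G * v.substOddPow F) * (2 * C c + 1) * h2C

lemma mooreAct_normalize {c : R} (hc : 2 * c = 1) (p : R⟦X⟧ × R⟦X⟧) :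
    MooreAct (-(C c * p.1.substOddPow X)) X p = (0, mooreInvariant c p) := by
  have h2C : 2 * C c = 1 := by rw [← map_ofNat C 2, ← map_mul, hc, map_one]
  simp only [MooreAct, mooreInvariant, comp_X, map_pow, Prod.mk.injEq]
  constructor
  · linear_combination (-(X * p.1.substOddPow X)) * h2C
  · linear_combination (-(C c * p.1.substOddPow X ^ 2)) * h2C

lemma mooreAct_zero_zero (F u : R⟦X⟧) : MooreAct 0 F (0, u) = (0, u.comp F) := by
  simp [MooreAct, substOddPow_zero]

lemma mooreInvariant_zero_fst (c : R) (u : R⟦X⟧) : mooreInvariant c (0, u) = u := by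
  simp [mooreInvariant, substOddPow_zero]

lemma isEven_mooreInvariant (c : R) {p : R⟦X⟧ × R⟦X⟧} (hw : p.2.IsEven) :
    (mooreInvariant c p).IsEven := by
  have hs := isOdd_X.substOddPow p.1
  rw [mooreInvariant, pow_two (p.1.substOddPow X)]
  exact hw.add ((hs.mul hs).C_mul _)

lemma constantCoeff_mooreInvariant (c : R) {p : R⟦X⟧ × R⟦X⟧} (hw : constantCoeff p.2 = 0) :
    constantCoeff (mooreInvariant c p) = 0 := by
  simp [mooreInvariant, hw, (isOdd_X.substOddPow p.1).constantCoeff_eq_zero]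

/-- **Classification of odd Moore algebras** (Theorem 3.1).  Over a commutative ring `R` with
`2` invertible, the assignment `u ↦ (0, u)` induces a bijection between `H`-equivalence
classes of even power series with zero constant coefficient and `∼`-equivalence classes of
pairs `(v, w)` of even power series with zero constant coefficient. -/
theorem odd_moore_classification (R : Type*) [CommRing R] (h2 : IsUnit (2 : R)) :
    ∃ e : Quot (fun u u' : {u : R⟦X⟧ // u.IsEven ∧ constantCoeff u = 0} =>
          ∃ F : R⟦X⟧, F.IsOdd ∧ F.InH ∧ u'.1 = u.1.comp F) ≃
        Quot (fun p p' : {p : R⟦X⟧ × R⟦X⟧ // p.1.IsEven ∧ constantCoeff p.1 = 0 ∧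
              p.2.IsEven ∧ constantCoeff p.2 = 0} =>
          ∃ G F : R⟦X⟧, G.IsOdd ∧ F.IsOdd ∧ F.InH ∧ p'.1 = MooreAct G F p.1),
      ∀ u, e (Quot.mk _ u) =
        Quot.mk _ ⟨((0 : R⟦X⟧), u.1), fun n _ => by simp, by simp, u.2.1, u.2.2⟩ := by
  obtain ⟨c, hc⟩ := h2.exists_right_inv
  refine ⟨⟨Quot.map (fun u => ⟨(0, u.1), fun n _ => by simp, by simp, u.2.1, u.2.2⟩) ?_,
    Quot.map (fun p => ⟨mooreInvariant c p.1, isEven_mooreInvariant c p.2.2.2.1,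
      constantCoeff_mooreInvariant c p.2.2.2.2⟩) ?_, ?_, ?_⟩, fun _ => rfl⟩
  · rintro u u' ⟨F, hF, hFH, hu'⟩
    exact ⟨0, F, isOdd_zero, hF, hFH,
      (congrArg (Prod.mk 0) hu').trans (mooreAct_zero_zero F u.1).symm⟩
  · rintro p p' ⟨G, F, hG, hF, hFH, hp'⟩
    exact ⟨F, hF, hFH,
      (congrArg (mooreInvariant c) hp').trans (mooreInvariant_mooreAct hc hG hF p.1)⟩
  · rintro ⟨u⟩
    exact congrArg (Quot.mk _) (Subtype.ext (mooreInvariant_zero_fst c u.1))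
  · rintro ⟨p⟩
    exact (Quot.sound ⟨_, X, (isOdd_X.substOddPow p.1.1).C_mul c |>.neg, isOdd_X,
      ⟨constantCoeff_X, by simp⟩, (mooreAct_normalize hc p.1).symm⟩).symm
end

section
/- Theorem 7.2(ii) specialized to associative algebras (a result the paper notes may be new): Let R be a commutative ring and A a unital associative R-algebra in which every infinitesimal automorphism is integrable. Let (μ_n)_{n≥0} and (μ'_n)_{n≥0} be formal one-parameter deformations of A with μ_n = 0 for 1 ≤ n < k and μ'_n = 0 for 1 ≤ n < N, where N ≥ k ≥ 1, which are equivalent via some formal automorphism, and suppose that the 2-cochain μ_k (which is automatically a Hochschild 2-cocycle) is not a Hochschild coboundary. Then N = k and μ_k − μ'_k is a Hochschild coboundary. -/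
variable (R : Type*) [CommRing R] (A : Type*) [Ring A] [Algebra R A]

/-- A formal one-parameter deformation of the unital associative `R`-algebra `A`: a sequence
of `R`-bilinear maps `μ_n` with `μ₀(a,b) = ab`, `μ_n(1,a) = μ_n(a,1) = 0` for `n ≥ 1`, and
the deformation (associativity) equations. -/
def IsFormalDeformation (μ : ℕ → A →ₗ[R] A →ₗ[R] A) : Prop :=
  (∀ a b : A, μ 0 a b = a * b) ∧
  (∀ n : ℕ, 1 ≤ n → ∀ a : A, μ n 1 a = 0 ∧ μ n a 1 = 0) ∧
  (∀ k : ℕ, 1 ≤ k → ∀ a b c : A,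
    ∑ i ∈ Finset.range (k + 1), μ i (μ (k - i) a b) c =
    ∑ i ∈ Finset.range (k + 1), μ i a (μ (k - i) b c))

/-- `φ` is a formal automorphism giving an equivalence from the deformation `μ'` to the
deformation `μ`: `φ₀ = id`, `φ_n(1) = 0` for `n ≥ 1`, and
`∑_{i+j=k} φ_i(μ'_j(a,b)) = ∑_{i+j+l=k} μ_i(φ_j a, φ_l b)` for all `k`. -/
def IsEquivalenceOfDeformations (φ : ℕ → A →ₗ[R] A) (μ' μ : ℕ → A →ₗ[R] A →ₗ[R] A) : Prop :=
  φ 0 = LinearMap.id ∧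
  (∀ n : ℕ, 1 ≤ n → φ n 1 = 0) ∧
  (∀ (k : ℕ) (a b : A),
    ∑ i ∈ Finset.range (k + 1), φ i (μ' (k - i) a b) =
    ∑ i ∈ Finset.range (k + 1), ∑ j ∈ Finset.range (k - i + 1),
      μ i (φ j a) (φ (k - i - j) b))

/-- An `R`-bilinear map is a Hochschild 2-coboundary if it is `δξ` for some `R`-linear
`ξ` with `ξ(1) = 0`. -/
def IsHochschildCoboundary (m : A →ₗ[R] A →ₗ[R] A) : Prop :=
  ∃ ξ : A →ₗ[R] A, ξ 1 = 0 ∧ ∀ a b : A, m a b = a * ξ b - ξ (a * b) + ξ a * b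

/-- Every infinitesimal automorphism of `A` is integrable: every derivation `D`, placed in
degree `k`, extends to a formal automorphism of the trivial deformation. -/
def EveryInfinitesimalAutomorphismIntegrable : Prop :=
  ∀ k : ℕ, 1 ≤ k → ∀ D : A →ₗ[R] A, (∀ a b : A, D (a * b) = D a * b + a * D b) →
    ∃ φ : ℕ → A →ₗ[R] A,
      φ 0 = LinearMap.id ∧ (∀ n : ℕ, 1 ≤ n → n < k → φ n = 0) ∧ φ k = D ∧
      (∀ n : ℕ, 1 ≤ n → φ n 1 = 0) ∧
      (∀ (n : ℕ) (a b : A),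
        ∑ i ∈ Finset.range (n + 1), φ i a * φ (n - i) b = φ n (a * b))

open Finset

section Aux

private lemma sum4 {M : Type*} [AddCommMonoid M] (n : ℕ) (F : ℕ → ℕ → ℕ → ℕ → M) :
    ∑ u ∈ range (n+1), ∑ c ∈ range (u+1), ∑ d ∈ range (n-u+1), F c (u-c) d (n-u-d)
  = ∑ m ∈ range (n+1), ∑ p ∈ range (n-m+1), ∑ c ∈ range (m+1), F c p (m-c) (n-m-p) := by
  rw [Finset.sum_sigma', Finset.sum_sigma', Finset.sum_sigma', Finset.sum_sigma']
  refine Finset.sum_nbij' (fun x => ⟨⟨x.1.2 + x.2, x.1.1 - x.1.2⟩, x.1.2⟩)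
    (fun y => ⟨⟨y.2 + y.1.2, y.2⟩, y.1.1 - y.2⟩) ?_ ?_ ?_ ?_ ?_ <;>
    rintro ⟨⟨a, b⟩, c⟩ h <;>
    simp only [Finset.mem_sigma, Finset.mem_range, Sigma.mk.inj_iff, heq_eq_eq, and_true,
      true_and, Prod.mk.injEq] at h ⊢
  · omega
  · omega
  · omega
  · omega
  · obtain ⟨⟨h1, h2⟩, h3⟩ := h
    have e1 : b + c - b = c := by omega
    have e2 : n - (b + c) - (a - b) = n - a - c := by omega
    rw [e1, e2]

variable {S : Type*} [CommRing S] {B : Type*} [Ring B] [Algebra S B]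

private lemma mult_comp (Ψ Θ : ℕ → B →ₗ[S] B)
    (hΨ : ∀ (n : ℕ) (a b : B), ∑ i ∈ range (n+1), Ψ i a * Ψ (n-i) b = Ψ n (a*b))
    (hΘ : ∀ (n : ℕ) (a b : B), ∑ i ∈ range (n+1), Θ i a * Θ (n-i) b = Θ n (a*b))
    (n : ℕ) (a b : B) :
    ∑ u ∈ range (n+1), (∑ c ∈ range (u+1), Ψ c (Θ (u-c) a)) *
      (∑ d ∈ range (n-u+1), Ψ d (Θ (n-u-d) b)) =
    ∑ m ∈ range (n+1), Ψ m (Θ (n-m) (a*b)) := by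
  calc ∑ u ∈ range (n+1), (∑ c ∈ range (u+1), Ψ c (Θ (u-c) a)) *
        (∑ d ∈ range (n-u+1), Ψ d (Θ (n-u-d) b))
      = ∑ u ∈ range (n+1), ∑ c ∈ range (u+1), ∑ d ∈ range (n-u+1),
          Ψ c (Θ (u-c) a) * Ψ d (Θ (n-u-d) b) :=
        sum_congr rfl fun u _ => sum_mul_sum _ _ _ _
    _ = ∑ m ∈ range (n+1), ∑ p ∈ range (n-m+1), ∑ c ∈ range (m+1),
          Ψ c (Θ p a) * Ψ (m-c) (Θ (n-m-p) b) :=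
        sum4 n (fun c p d q => Ψ c (Θ p a) * Ψ d (Θ q b))
    _ = ∑ m ∈ range (n+1), ∑ p ∈ range (n-m+1), Ψ m (Θ p a * Θ (n-m-p) b) :=
        sum_congr rfl fun m _ => sum_congr rfl fun p _ => hΨ m _ _
    _ = ∑ m ∈ range (n+1), Ψ m (Θ (n-m) (a*b)) := by
        refine sum_congr rfl fun m _ => ?_
        rw [← map_sum, hΘ (n-m)]

/-- Given integrability of infinitesimal automorphisms, any sequence of linear maps that is
multiplicative in all degrees `< k` agrees below degree `k` with a sequence multiplicative in
all degrees. -/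
private lemma exists_full (hint : EveryInfinitesimalAutomorphismIntegrable S B)
    (φ : ℕ → B →ₗ[S] B) (hφ0 : φ 0 = LinearMap.id) (hφ1 : ∀ n : ℕ, 1 ≤ n → φ n 1 = 0)
    (k : ℕ)
    (htr : ∀ n : ℕ, n < k → ∀ a b : B,
      φ n (a * b) = ∑ i ∈ range (n+1), φ i a * φ (n-i) b) :
    ∃ Θ : ℕ → B →ₗ[S] B, Θ 0 = LinearMap.id ∧ (∀ n : ℕ, 1 ≤ n → Θ n 1 = 0) ∧
      (∀ (n : ℕ) (a b : B), ∑ i ∈ range (n+1), Θ i a * Θ (n-i) b = Θ n (a*b)) ∧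
      (∀ n : ℕ, n < k → Θ n = φ n) := by
  suffices h : ∀ r : ℕ, r ≤ k → ∃ Θ : ℕ → B →ₗ[S] B, Θ 0 = LinearMap.id ∧
      (∀ n : ℕ, 1 ≤ n → Θ n 1 = 0) ∧
      (∀ (n : ℕ) (a b : B), ∑ i ∈ range (n+1), Θ i a * Θ (n-i) b = Θ n (a*b)) ∧
      (∀ n : ℕ, n < r → Θ n = φ n) from h k le_rfl
  intro r
  induction r with
  | zero =>
    intro _
    refine ⟨fun n => if n = 0 then LinearMap.id else 0, if_pos rfl, ?_, ?_, fun n hn => by omega⟩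
    · intro n hn
      have h : ¬ n = 0 := by omega
      simp [h]
    · intro n a b
      rcases Nat.eq_zero_or_pos n with h0 | h1
      · subst h0; simp
      · have hn : ¬ n = 0 := by omega
        simp only [hn, if_false, LinearMap.zero_apply]
        refine Finset.sum_eq_zero fun i hi => ?_
        rcases Nat.eq_zero_or_pos i with h2 | h3
        · subst h2
          have h : ¬ n - 0 = 0 := by omega
          simp [h, hn]
        · have h : ¬ i = 0 := by omega
          simp [h]
  | succ r ih =>
    intro hrk
    obtain ⟨Θ, hΘ0, hΘ1, hΘm, hag⟩ := ih (by omega)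
    rcases Nat.eq_zero_or_pos r with hr0 | hr1
    · subst hr0
      refine ⟨Θ, hΘ0, hΘ1, hΘm, fun n hn => ?_⟩
      have : n = 0 := by omega
      subst this
      rw [hΘ0, hφ0]
    -- `D = φ r - Θ r` is a derivation
    obtain ⟨m, rfl⟩ : ∃ m, r = m + 1 := ⟨r - 1, by omega⟩
    have key : ∀ a b : B, (φ (m+1) - Θ (m+1)) (a * b) =
        (φ (m+1) - Θ (m+1)) a * b + a * (φ (m+1) - Θ (m+1)) b := by
      intro a b
      have h1 := htr (m+1) (by omega) a b
      have h2 := (hΘm (m+1) a b).symm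
      rw [Finset.sum_range_succ, Finset.sum_range_succ'] at h1 h2
      have hmid : ∑ i ∈ range m, Θ (i+1) a * Θ (m+1-(i+1)) b
          = ∑ i ∈ range m, φ (i+1) a * φ (m+1-(i+1)) b := by
        refine sum_congr rfl fun i hi => ?_
        have him := Finset.mem_range.mp hi
        rw [hag (i+1) (by omega), hag (m+1-(i+1)) (by omega)]
      rw [hmid] at h2
      simp only [hφ0, hΘ0, LinearMap.id_coe, id_eq, Nat.sub_zero, Nat.sub_self] at h1 h2
      simp only [LinearMap.sub_apply, mul_sub, sub_mul, h1, h2]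
      abel
    obtain ⟨Ψ, hΨ0, hΨlow, hΨr, hΨ1, hΨm⟩ := hint (m+1) (by omega) (φ (m+1) - Θ (m+1)) key
    refine ⟨fun n => ∑ i ∈ range (n+1), Ψ i ∘ₗ Θ (n-i), ?_, ?_, ?_, ?_⟩
    · simp [hΨ0, hΘ0]
    · intro n hn
      simp only [LinearMap.coe_sum, Finset.sum_apply, LinearMap.coe_comp, Function.comp_apply]
      rw [Finset.sum_range_succ]
      have : ∀ i ∈ range n, Ψ i (Θ (n - i) 1) = 0 := fun i hi => by
        rw [hΘ1 (n - i) (by simp at hi; omega), map_zero]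
      rw [Finset.sum_eq_zero this, Nat.sub_self, hΘ0]
      simpa using hΨ1 n hn
    · intro n a b
      simp only [LinearMap.coe_sum, Finset.sum_apply, LinearMap.coe_comp, Function.comp_apply]
      exact mult_comp Ψ Θ hΨm hΘm n a b
    · intro n hn
      show ∑ i ∈ range (n+1), Ψ i ∘ₗ Θ (n-i) = φ n
      rcases Nat.lt_or_ge n (m+1) with hlt | hge
      · rw [Finset.sum_eq_single_of_mem 0 (by simp) ?side, Nat.sub_zero, hΨ0,
          LinearMap.id_comp, hag n hlt]
        case side =>
          intro i hi hne
          rw [hΨlow i (by omega) (by simp at hi; omega)]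
          exact LinearMap.zero_comp _
      · have hn' : n = m + 1 := by omega
        subst hn'
        rw [Finset.sum_range_succ, Nat.sub_self, hΘ0, LinearMap.comp_id, hΨr]
        rw [Finset.sum_eq_single_of_mem 0 (by simp) ?side2, Nat.sub_zero, hΨ0,
          LinearMap.id_comp]
        case side2 =>
          intro i hi hne
          rw [hΨlow i (by omega) (by simp at hi; omega)]
          exact LinearMap.zero_comp _
        abel

/-- **Theorem 7.2(ii) specialized to associative algebras.**  If every infinitesimal
automorphism of `A` is integrable, two equivalent formal deformations beginning in degrees
`k ≤ N` respectively, with the (automatically cocycle) infinitesimal `μ_k` not a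
coboundary, satisfy `N = k` and `μ_k − μ'_k` is a coboundary. -/
theorem equivalent_deformations_infinitesimals_cohomologous
    (μ μ' : ℕ → A →ₗ[R] A →ₗ[R] A)
    (hμ : IsFormalDeformation R A μ) (hμ' : IsFormalDeformation R A μ')
    (k N : ℕ) (hk : 1 ≤ k) (hkN : k ≤ N)
    (hμlow : ∀ n : ℕ, 1 ≤ n → n < k → μ n = 0)
    (hμ'low : ∀ n : ℕ, 1 ≤ n → n < N → μ' n = 0)
    (φ : ℕ → A →ₗ[R] A) (hφ : IsEquivalenceOfDeformations R A φ μ' μ)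
    (hint : EveryInfinitesimalAutomorphismIntegrable R A)
    (hnc : ¬ IsHochschildCoboundary R A (μ k)) :
    N = k ∧ IsHochschildCoboundary R A (μ k - μ' k) := by
  classical
  obtain ⟨hφ0, hφ1, hφeq⟩ := hφ
  have hμ0 := hμ.1
  have hμ'0 := hμ'.1
  -- truncated multiplicativity of φ below degree k
  have htr : ∀ n : ℕ, n < k → ∀ a b : A,
      φ n (a * b) = ∑ i ∈ range (n+1), φ i a * φ (n-i) b := by
    intro n hn a b
    have h := hφeq n a b
    have hL : ∑ i ∈ range (n+1), φ i (μ' (n-i) a b) = φ n (a * b) := by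
      rw [Finset.sum_eq_single_of_mem n (self_mem_range_succ n) ?side3, Nat.sub_self, hμ'0]
      case side3 =>
        intro i hi hne
        rw [hμ'low (n - i) (by simp at hi; omega) (by simp at hi; omega)]
        simp
    have hR : ∑ i ∈ range (n+1), ∑ j ∈ range (n - i + 1), μ i (φ j a) (φ (n-i-j) b)
        = ∑ i ∈ range (n+1), φ i a * φ (n-i) b := by
      rw [Finset.sum_eq_single_of_mem 0 (by simp) ?side4, Nat.sub_zero]
      · exact sum_congr rfl fun j _ => by rw [hμ0]
      case side4 =>
        intro i hi hne
        rw [hμlow i (by omega) (by simp at hi; omega)]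
        simp
    rw [hL, hR] at h
    exact h
  obtain ⟨Θ, hΘ0, hΘ1, hΘm, hΘag⟩ := exists_full hint φ hφ0 hφ1 k htr
  obtain ⟨m, rfl⟩ : ∃ m, k = m + 1 := ⟨k - 1, by omega⟩
  set ξ : A →ₗ[R] A := Θ (m+1) - φ (m+1) with hξ
  -- the key coboundary identity
  have hco : ∀ a b : A, μ (m+1) a b - μ' (m+1) a b = a * ξ b - ξ (a * b) + ξ a * b := by
    intro a b
    -- identity (C) from full multiplicativity of Θ
    have hC := hΘm (m+1) a b
    rw [Finset.sum_range_succ, Finset.sum_range_succ'] at hC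
    have hmidC : ∑ i ∈ range m, Θ (i+1) a * Θ (m+1-(i+1)) b
        = ∑ i ∈ range m, φ (i+1) a * φ (m+1-(i+1)) b := by
      refine sum_congr rfl fun i hi => ?_
      have him := Finset.mem_range.mp hi
      rw [hΘag (i+1) (by omega), hΘag (m+1-(i+1)) (by omega)]
    rw [hmidC, Nat.sub_self, Nat.sub_zero, hΘ0] at hC
    simp only [LinearMap.id_coe, id_eq] at hC
    -- hC : (∑ i ∈ range m, φ (i+1) a * φ (m+1-(i+1)) b + a * Θ (m+1) b) + Θ (m+1) a * b
    --      = Θ (m+1) (a*b)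
    -- identity (E) from the equivalence equation in degree k = m+1
    have hE := hφeq (m+1) a b
    have hEL : ∑ i ∈ range (m+1+1), φ i (μ' (m+1-i) a b)
        = φ (m+1) (a * b) + μ' (m+1) a b := by
      rw [Finset.sum_range_succ, Finset.sum_range_succ']
      have : ∀ i ∈ range m, φ (i+1) (μ' (m+1-(i+1)) a b) = 0 := by
        intro i hi
        rw [hμ'low (m+1-(i+1)) (by simp at hi; omega) (by simp at hi; omega)]
        simp
      rw [Finset.sum_eq_zero this, Nat.sub_self, Nat.sub_zero, hμ'0, hφ0]
      simp only [LinearMap.id_coe, id_eq, zero_add]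
      rw [add_comm]
    have hER : ∑ i ∈ range (m+1+1), ∑ j ∈ range (m+1-i+1), μ i (φ j a) (φ (m+1-i-j) b)
        = μ (m+1) a b + ((∑ i ∈ range m, φ (i+1) a * φ (m+1-(i+1)) b + a * φ (m+1) b)
            + φ (m+1) a * b) := by
      rw [Finset.sum_range_succ, Finset.sum_range_succ']
      have hz : ∀ i ∈ range m, ∑ j ∈ range (m+1-(i+1)+1), μ (i+1) (φ j a) (φ (m+1-(i+1)-j) b)
          = 0 := by
        intro i hi
        refine Finset.sum_eq_zero fun j hj => ?_
        rw [hμlow (i+1) (by omega) (by simp at hi; omega)]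
        simp
      rw [Finset.sum_eq_zero hz, Nat.sub_self, Nat.sub_zero, zero_add]
      -- remaining : (∑ j ∈ range (m+1+1), μ 0 (φ j a) (φ (m+1-j) b)) +
      --             (∑ j ∈ range 1, μ (m+1) (φ j a) (φ (0-j) b)) = ...
      have h0 : ∑ j ∈ range (m+1+1), μ 0 (φ j a) (φ (m+1-j) b)
          = (∑ i ∈ range m, φ (i+1) a * φ (m+1-(i+1)) b + a * φ (m+1) b)
            + φ (m+1) a * b := by
        rw [Finset.sum_range_succ, Finset.sum_range_succ']
        simp only [hμ0, Nat.sub_self, Nat.sub_zero, hφ0, LinearMap.id_coe, id_eq]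
      have h1 : ∑ j ∈ range (0+1), μ (m+1) (φ j a) (φ (0-j) b) = μ (m+1) a b := by
        simp [hφ0]
      rw [h0, h1, add_comm]
    rw [hEL, hER] at hE
    -- now pure additive bookkeeping
    have hMid : ∑ i ∈ range m, φ (i+1) a * φ (m+1-(i+1)) b
        = Θ (m+1) (a*b) - a * Θ (m+1) b - Θ (m+1) a * b := by
      rw [← hC]; abel
    rw [hMid] at hE
    simp only [hξ, LinearMap.sub_apply, mul_sub, sub_mul]
    -- hE : φ (m+1) (a*b) + μ' (m+1) a b
    --    = μ (m+1) a b + ((Θ(ab) - aΘb - Θa·b + a * φ (m+1) b) + φ (m+1) a * b)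
    rw [eq_sub_of_add_eq hE.symm]
    abel
  refine ⟨?_, ?_⟩
  · by_contra hne
    have hlt : m + 1 < N := by omega
    have hz : μ' (m+1) = 0 := hμ'low (m+1) (by omega) hlt
    exact hnc ⟨ξ, by simp [hξ, hΘ1 (m+1) (by omega), hφ1 (m+1) (by omega)],
      fun a b => by have := hco a b; rw [hz] at this; simpa using this⟩
  · exact ⟨ξ, by simp [hξ, hΘ1 (m+1) (by omega), hφ1 (m+1) (by omega)],
      fun a b => by simpa using hco a b⟩

end Aux
end
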